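/- arXiv:2507.14522 — 2 statements merged into one kernel-verified Lean document; each statement's English description precedes it below -/
import Mathlib

section
/- Let V : ℝ × ℝ → ℝ be twice continuously differentiable and satisfy ∂²V/∂ξ∂η(ξ,η) = 0 for all (ξ,η). Define u(x,t) = x · V( 1/x + t, 1/x − t ) for x ≠ 0. Then u satisfies the wave equation ∂²u/∂t²(x,t) = x⁴ · ∂²u/∂x²(x,t) for all x ≠ 0 and all t. -/
/-- First partial derivative with respect to the first argument. -/
noncomputable def pdx (u : ℝ × ℝ → ℝ) : ℝ × ℝ → ℝ :=
  fun p => deriv (fun x => u (x, p.2)) p.1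

/-- First partial derivative with respect to the second argument. -/
noncomputable def pdt (u : ℝ × ℝ → ℝ) : ℝ × ℝ → ℝ :=
  fun p => deriv (fun t => u (p.1, t)) p.2

/-!
In the characteristic coordinates `(ξ, η) = charCoords x t = (1/x + t, 1/x - t)` we have
`∂ₜ = ∂_ξ - ∂_η` and `∂ₓ = -x⁻² (∂_ξ + ∂_η)`. For `u = x V(ξ, η)` this gives
`u_tt = x (V_ξξ - 2 V_ξη + V_ηη)` and, the prefactor `x` cancelling all first-order terms,
`u_xx = x⁻³ (V_ξξ + 2 V_ξη + V_ηη)`. As `V_ξη = 0`, `u_tt = x (V_ξξ + V_ηη) = x⁴ u_xx`.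
-/

noncomputable def charCoords (x t : ℝ) : ℝ × ℝ := (1 / x + t, 1 / x - t)

theorem hasDerivAt_charCoords_left {x : ℝ} (t : ℝ) (hx : x ≠ 0) :
    HasDerivAt (fun z => charCoords z t) (-(x ^ 2)⁻¹ • ((1 : ℝ), (1 : ℝ))) x := by
  have hinv : HasDerivAt (fun z : ℝ => 1 / z) (-(x ^ 2)⁻¹) x := by
    simpa only [one_div] using hasDerivAt_inv hx
  simpa [charCoords] using (hinv.add_const t).prodMk (hinv.sub_const t)

theorem hasDerivAt_charCoords_right (x t : ℝ) :
    HasDerivAt (fun s => charCoords x s) ((1 : ℝ), (-1 : ℝ)) t := by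
  simpa [charCoords] using
    ((hasDerivAt_id t).const_add (1 / x)).prodMk ((hasDerivAt_id t).const_sub (1 / x))

section Composition

variable {F : Type*} [NormedAddCommGroup F] [NormedSpace ℝ F] {f : ℝ × ℝ → F} {x t : ℝ}

theorem HasFDerivAt.hasDerivAt_comp_charCoords_left {f' : ℝ × ℝ →L[ℝ] F}
    (hf : HasFDerivAt f f' (charCoords x t)) (hx : x ≠ 0) :
    HasDerivAt (fun z => f (charCoords z t)) (-(x ^ 2)⁻¹ • f' (1, 1)) x := by
  have hcomp := hf.comp_hasDerivAt x (hasDerivAt_charCoords_left t hx)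
  rwa [map_smul] at hcomp

theorem HasFDerivAt.hasDerivAt_comp_charCoords_right {f' : ℝ × ℝ →L[ℝ] F}
    (hf : HasFDerivAt f f' (charCoords x t)) :
    HasDerivAt (fun s => f (charCoords x s)) (f' (1, -1)) t :=
  hf.comp_hasDerivAt t (hasDerivAt_charCoords_right x t)

end Composition

theorem hasFDerivAt_fderiv_apply {𝕜 E F : Type*} [NontriviallyNormedField 𝕜]
    [NormedAddCommGroup E] [NormedSpace 𝕜 E] [NormedAddCommGroup F] [NormedSpace 𝕜 F]
    {f : E → F} {p : E} (hf : DifferentiableAt 𝕜 (fderiv 𝕜 f) p) (v : E) :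
    HasFDerivAt (fun q => fderiv 𝕜 f q v) ((fderiv 𝕜 (fderiv 𝕜 f) p).flip v) p := by
  simpa using hf.hasFDerivAt.clm_apply (hasFDerivAt_const v p)

section Partials

variable {f : ℝ × ℝ → ℝ}

theorem pdx_eq_fderiv_apply {p : ℝ × ℝ} (hf : DifferentiableAt ℝ f p) :
    pdx f p = fderiv ℝ f p (1, 0) :=
  (hf.hasFDerivAt.comp_hasDerivAt p.1
    ((hasDerivAt_id p.1).prodMk (hasDerivAt_const p.1 p.2))).deriv

theorem pdt_eq_fderiv_apply {p : ℝ × ℝ} (hf : DifferentiableAt ℝ f p) :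
    pdt f p = fderiv ℝ f p (0, 1) :=
  (hf.hasFDerivAt.comp_hasDerivAt p.2
    ((hasDerivAt_const p.2 p.1).prodMk (hasDerivAt_id p.2))).deriv

theorem pdt_pdx_eq_fderiv_fderiv_apply (hf : ContDiff ℝ 2 f) (p : ℝ × ℝ) :
    pdt (pdx f) p = fderiv ℝ (fderiv ℝ f) p (0, 1) (1, 0) := by
  have hf1 : Differentiable ℝ f := hf.differentiable two_ne_zero
  have hDf : Differentiable ℝ (fderiv ℝ f) :=
    (hf.fderiv_right le_rfl).differentiable one_ne_zero
  have hpdx : pdx f = fun q => fderiv ℝ f q (1, 0) :=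
    funext fun q => pdx_eq_fderiv_apply (hf1 q)
  have hD := hasFDerivAt_fderiv_apply (hDf p) (1, 0)
  rw [hpdx, pdt_eq_fderiv_apply hD.differentiableAt, hD.fderiv]
  rfl

end Partials

theorem ContinuousLinearMap.apply_sub_apply_sub_eq {E G : Type*} [NormedAddCommGroup E]
    [NormedSpace ℝ E] [NormedAddCommGroup G] [NormedSpace ℝ G] (M : E →L[ℝ] E →L[ℝ] G)
    {v w : E} (hvw : M v w = 0) (hwv : M w v = 0) : M (v - w) (v - w) = M (v + w) (v + w) := by
  simp only [map_sub, map_add, sub_apply, add_apply, hvw, hwv]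
  abel

section Transform

variable {V u : ℝ × ℝ → ℝ} (hu : ∀ x t : ℝ, x ≠ 0 → u (x, t) = x * V (charCoords x t))
  {x : ℝ} (hx : x ≠ 0)
include hu hx

theorem pdt_eq_of_charCoords (hV : Differentiable ℝ V) (t : ℝ) :
    pdt u (x, t) = x * fderiv ℝ V (charCoords x t) (1, -1) := by
  have hux : (fun s => u (x, s)) = fun s => x * V (charCoords x s) :=
    funext fun s => hu x s hx
  have hV' := (hV (charCoords x t)).hasFDerivAt.hasDerivAt_comp_charCoords_right
  change deriv (fun s => u (x, s)) t = _
  rw [hux, (hV'.const_mul x).deriv]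

theorem pdx_eq_of_charCoords (hV : Differentiable ℝ V) (t : ℝ) :
    pdx u (x, t) = V (charCoords x t) - fderiv ℝ V (charCoords x t) (1, 1) / x := by
  have hux : (fun z => u (z, t)) =ᶠ[nhds x] fun z => z * V (charCoords z t) :=
    (eventually_ne_nhds hx).mono fun z hz => hu z t hz
  have hV' := (hV (charCoords x t)).hasFDerivAt.hasDerivAt_comp_charCoords_left hx
  change deriv (fun z => u (z, t)) x = _
  rw [hux.deriv_eq, ((hasDerivAt_id' x).fun_mul hV').deriv, smul_eq_mul]
  field_simp
  ring

theorem pdt_pdt_eq_of_charCoords (hV : ContDiff ℝ 2 V) (t : ℝ) :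
    pdt (pdt u) (x, t) = x * fderiv ℝ (fderiv ℝ V) (charCoords x t) (1, -1) (1, -1) := by
  have hDV : Differentiable ℝ (fderiv ℝ V) := (hV.fderiv_right le_rfl).differentiable one_ne_zero
  have hpdt : (fun s => pdt u (x, s)) = fun s => x * fderiv ℝ V (charCoords x s) (1, -1) :=
    funext (pdt_eq_of_charCoords hu hx (hV.differentiable two_ne_zero))
  have hDV' :=
    (hasFDerivAt_fderiv_apply (hDV (charCoords x t)) (1, -1)).hasDerivAt_comp_charCoords_right
  change deriv (fun s => pdt u (x, s)) t = _
  rw [hpdt, (hDV'.const_mul x).deriv]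
  rfl

theorem pdx_pdx_eq_of_charCoords (hV : ContDiff ℝ 2 V) (t : ℝ) :
    pdx (pdx u) (x, t) = fderiv ℝ (fderiv ℝ V) (charCoords x t) (1, 1) (1, 1) / x ^ 3 := by
  have hV1 : Differentiable ℝ V := hV.differentiable two_ne_zero
  have hDV : Differentiable ℝ (fderiv ℝ V) := (hV.fderiv_right le_rfl).differentiable one_ne_zero
  have hpdx : (fun z => pdx u (z, t)) =ᶠ[nhds x]
      fun z => V (charCoords z t) - fderiv ℝ V (charCoords z t) (1, 1) / z :=
    (eventually_ne_nhds hx).mono fun z hz => pdx_eq_of_charCoords hu hz hV1 t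
  have hV' := (hV1 (charCoords x t)).hasFDerivAt.hasDerivAt_comp_charCoords_left hx
  have hDV' :=
    (hasFDerivAt_fderiv_apply (hDV (charCoords x t)) (1, 1)).hasDerivAt_comp_charCoords_left hx
  change deriv (fun z => pdx u (z, t)) x = _
  rw [hpdx.deriv_eq, (hV'.fun_sub (hDV'.fun_div (hasDerivAt_id' x) hx)).deriv]
  simp only [smul_eq_mul, ContinuousLinearMap.flip_apply]
  field_simp
  ring

end Transform

theorem stmt_14 (V u : ℝ × ℝ → ℝ) (hV : ContDiff ℝ 2 V)
    (hVwave : ∀ ξ η : ℝ, pdt (pdx V) (ξ, η) = 0)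
    (hu : ∀ x t : ℝ, x ≠ 0 → u (x, t) = x * V (1 / x + t, 1 / x - t)) :
    ∀ x t : ℝ, x ≠ 0 →
      pdt (pdt u) (x, t) = x ^ 4 * pdx (pdx u) (x, t) := by
  intro x t hx
  rw [pdt_pdt_eq_of_charCoords hu hx hV, pdx_pdx_eq_of_charCoords hu hx hV]
  set D2V := fderiv ℝ (fderiv ℝ V) (charCoords x t)
  have hmixed : D2V (0, 1) (1, 0) = 0 :=
    (pdt_pdx_eq_fderiv_fderiv_apply hV _).symm.trans (hVwave _ _)
  have hsymm : IsSymmSndFDerivAt ℝ V (charCoords x t) :=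
    hV.contDiffAt.isSymmSndFDerivAt (by simp)
  have hdiag : D2V (1, -1) (1, -1) = D2V (1, 1) (1, 1) := by
    simpa using D2V.apply_sub_apply_sub_eq ((hsymm _ _).trans hmixed) hmixed
  rw [hdiag]
  field_simp
end

section
/- Let B : ℝ × ℝ → ℝ be three times continuously differentiable on {(x,T) : x > 0 and T > 0} and satisfy the wave equation ∂²B/∂T²(x,T) = T^{−4/3} · x⁴ · ∂²B/∂x²(x,T) for all x > 0 and T > 0. Then there exist functions F, G : ℝ → ℝ, with F three times continuously differentiable on (0,∞) and G three times continuously differentiable on ℝ, such that B(x,T) = x · ( F(1/x + 3 T^{1/3}) + G(1/x − 3 T^{1/3}) + 3 T^{1/3} · ( G'(1/x − 3 T^{1/3}) − F'(1/x + 3 T^{1/3}) ) ) for all x > 0 and T > 0. -/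
open Set Filter Topology

section PartialDerivatives

variable {f g : ℝ × ℝ → ℝ} {p : ℝ × ℝ} {U : Set (ℝ × ℝ)}

theorem tendsto_mk_left (p : ℝ × ℝ) : Tendsto (fun x : ℝ => (x, p.2)) (𝓝 p.1) (𝓝 p) :=
  (continuous_id.prodMk continuous_const).tendsto' _ _ rfl

theorem tendsto_mk_right (p : ℝ × ℝ) : Tendsto (fun t : ℝ => (p.1, t)) (𝓝 p.2) (𝓝 p) :=
  (continuous_const.prodMk continuous_id).tendsto' _ _ rfl

theorem ContDiffOn.differentiableAt_of_isOpen {n : WithTop ℕ∞} (hf : ContDiffOn ℝ n f U)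
    (hU : IsOpen U) (hn : n ≠ 0) (hp : p ∈ U) : DifferentiableAt ℝ f p :=
  (hf.differentiableOn hn).differentiableAt (hU.mem_nhds hp)

theorem hasDerivAt_pdx (hf : DifferentiableAt ℝ f p) :
    HasDerivAt (fun x => f (x, p.2)) (pdx f p) p.1 :=
  (hf.comp p.1 (differentiableAt_id.prodMk (differentiableAt_const _))).hasDerivAt

theorem hasDerivAt_pdt (hf : DifferentiableAt ℝ f p) :
    HasDerivAt (fun t => f (p.1, t)) (pdt f p) p.2 :=
  (hf.comp p.2 ((differentiableAt_const _).prodMk differentiableAt_id)).hasDerivAt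

theorem pdx_eq_fderiv (hf : DifferentiableAt ℝ f p) : pdx f p = fderiv ℝ f p (1, 0) :=
  (hasDerivAt_pdx hf).unique <|
    hf.hasFDerivAt.comp_hasDerivAt p.1 ((hasDerivAt_id _).prodMk (hasDerivAt_const _ _))

theorem pdt_eq_fderiv (hf : DifferentiableAt ℝ f p) : pdt f p = fderiv ℝ f p (0, 1) :=
  (hasDerivAt_pdt hf).unique <|
    hf.hasFDerivAt.comp_hasDerivAt p.2 ((hasDerivAt_const _ _).prodMk (hasDerivAt_id _))

theorem Filter.EventuallyEq.pdx_eq (h : f =ᶠ[𝓝 p] g) : pdx f p = pdx g p :=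
  (h.comp_tendsto (tendsto_mk_left p)).deriv_eq

theorem Filter.EventuallyEq.pdt_eq (h : f =ᶠ[𝓝 p] g) : pdt f p = pdt g p :=
  (h.comp_tendsto (tendsto_mk_right p)).deriv_eq

theorem hasDerivAt_comp_prodMk {γ₁ γ₂ : ℝ → ℝ} {d₁ d₂ t : ℝ}
    (hf : DifferentiableAt ℝ f (γ₁ t, γ₂ t)) (h₁ : HasDerivAt γ₁ d₁ t)
    (h₂ : HasDerivAt γ₂ d₂ t) :
    HasDerivAt (fun s => f (γ₁ s, γ₂ s))
      (pdx f (γ₁ t, γ₂ t) * d₁ + pdt f (γ₁ t, γ₂ t) * d₂) t := by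
  refine (hf.hasFDerivAt.comp_hasDerivAt t (h₁.prodMk h₂)).congr_deriv ?_
  have hd : ((d₁, d₂) : ℝ × ℝ) = d₁ • ((1, 0) : ℝ × ℝ) + d₂ • ((0, 1) : ℝ × ℝ) := by simp
  rw [pdx_eq_fderiv hf, pdt_eq_fderiv hf, hd, map_add, map_smul, map_smul, smul_eq_mul,
    smul_eq_mul, mul_comm d₁, mul_comm d₂]

theorem ContDiffOn.pdx {n m : WithTop ℕ∞} (hf : ContDiffOn ℝ n f U) (hU : IsOpen U)
    (hmn : m + 1 ≤ n) : ContDiffOn ℝ m (pdx f) U :=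
  ((hf.fderiv_of_isOpen hU hmn).clm_apply (contDiffOn_const (c := (1, 0)))).congr fun _ hq =>
    pdx_eq_fderiv (hf.differentiableAt_of_isOpen hU (ne_bot_of_le_ne_bot (by simp) hmn) hq)

theorem ContDiffOn.pdt {n m : WithTop ℕ∞} (hf : ContDiffOn ℝ n f U) (hU : IsOpen U)
    (hmn : m + 1 ≤ n) : ContDiffOn ℝ m (pdt f) U :=
  ((hf.fderiv_of_isOpen hU hmn).clm_apply (contDiffOn_const (c := (0, 1)))).congr fun _ hq =>
    pdt_eq_fderiv (hf.differentiableAt_of_isOpen hU (ne_bot_of_le_ne_bot (by simp) hmn) hq)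

theorem pdx_pdt_eq_pdt_pdx (hf : ContDiffOn ℝ 2 f U) (hU : IsOpen U) (hp : p ∈ U) :
    pdx (pdt f) p = pdt (pdx f) p := by
  have hfp := hf.contDiffAt (hU.mem_nhds hp)
  have hdf : DifferentiableAt ℝ (fderiv ℝ f) p :=
    (hfp.fderiv_right (m := 1) le_rfl).differentiableAt one_ne_zero
  have hnear : ∀ᶠ q in 𝓝 p, DifferentiableAt ℝ f q :=
    eventually_of_mem (hU.mem_nhds hp) fun q => hf.differentiableAt_of_isOpen hU two_ne_zero
  have hx : pdx f =ᶠ[𝓝 p] fun q => fderiv ℝ f q (1, 0) := hnear.mono fun q => pdx_eq_fderiv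
  have ht : pdt f =ᶠ[𝓝 p] fun q => fderiv ℝ f q (0, 1) := hnear.mono fun q => pdt_eq_fderiv
  rw [ht.pdx_eq, hx.pdt_eq,
    pdx_eq_fderiv (hdf.clm_apply (differentiableAt_const _)),
    pdt_eq_fderiv (hdf.clm_apply (differentiableAt_const _)),
    fderiv_clm_apply hdf (differentiableAt_const _),
    fderiv_clm_apply hdf (differentiableAt_const _)]
  simpa using hfp.isSymmSndFDerivAt (by simp) (1, 0) (0, 1)

theorem pdx_pdt_pdt_eq_pdt_pdt_pdx (hf : ContDiffOn ℝ 3 f U) (hU : IsOpen U) (hp : p ∈ U) :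
    pdx (pdt (pdt f)) p = pdt (pdt (pdx f)) p := by
  rw [pdx_pdt_eq_pdt_pdx (hf.pdt hU (by norm_num)) hU hp]
  exact Filter.EventuallyEq.pdt_eq <| eventually_of_mem (hU.mem_nhds hp) fun q hq =>
    pdx_pdt_eq_pdt_pdx (hf.of_le (by norm_num)) hU hq

end PartialDerivatives

section OneVariable

variable {f g : ℝ → ℝ} {s : Set ℝ}

theorem Set.OrdConnected.eq_add_mul_sub_of_hasDerivAt (hs : s.OrdConnected) {a b c : ℝ}
    (hf : ∀ t ∈ s, HasDerivAt f c t) (ha : a ∈ s) (hb : b ∈ s) : f b = f a + c * (b - a) := by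
  have := intervalIntegral.integral_eq_sub_of_hasDerivAt
    (fun t ht => hf t (hs.uIcc_subset ha hb ht)) (intervalIntegrable_const (c := c))
  simp only [intervalIntegral.integral_const, smul_eq_mul] at this
  linarith

theorem hasDerivAt_integral_of_continuousOn (hs : IsOpen s) (hsc : s.OrdConnected)
    (hg : ContinuousOn g s) {a x : ℝ} (ha : a ∈ s) (hx : x ∈ s) :
    HasDerivAt (fun y => ∫ t in a..y, g t) (g x) x :=
  intervalIntegral.integral_hasDerivAt_right
    ((hg.mono (hsc.uIcc_subset ha hx)).intervalIntegrable)
    (hg.stronglyMeasurableAtFilter hs x hx) (hg.continuousAt (hs.mem_nhds hx))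

theorem contDiffOn_integral {n : ℕ} (hs : IsOpen s) (hsc : s.OrdConnected)
    (hg : ContDiffOn ℝ n g s) {a : ℝ} (ha : a ∈ s) :
    ContDiffOn ℝ (n + 1) (fun y => ∫ t in a..y, g t) s := by
  have hderiv := fun x (hx : x ∈ s) =>
    hasDerivAt_integral_of_continuousOn hs hsc hg.continuousOn ha hx
  refine (contDiffOn_succ_iff_deriv_of_isOpen hs).2
    ⟨fun x hx => (hderiv x hx).differentiableAt.differentiableWithinAt, by simp, ?_⟩
  exact hg.congr fun x hx => (hderiv x hx).deriv

theorem ContDiffOn.exists_hasDerivAt_hasDerivAt {n : ℕ} (hs : IsOpen s) (hsc : s.OrdConnected)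
    (hg : ContDiffOn ℝ n g s) {a : ℝ} (ha : a ∈ s) :
    ∃ F F₁ : ℝ → ℝ, ContDiffOn ℝ (n + 2) F s ∧
      ∀ x ∈ s, HasDerivAt F (F₁ x) x ∧ HasDerivAt F₁ (g x) x := by
  set F₁ := fun y => ∫ t in a..y, g t
  have hF₁ : ContDiffOn ℝ (n + 1 : ℕ) F₁ s := contDiffOn_integral hs hsc hg ha
  refine ⟨fun y => ∫ t in a..y, F₁ t, F₁, contDiffOn_integral hs hsc hF₁ ha, fun x hx =>
    ⟨hasDerivAt_integral_of_continuousOn hs hsc hF₁.continuousOn ha hx,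
      hasDerivAt_integral_of_continuousOn hs hsc hg.continuousOn ha hx⟩⟩

end OneVariable

/-- The image of the quadrant `x > 0, T > 0` under the characteristic coordinates
`u = 1/x + 3 T^(1/3)`, `v = 1/x - 3 T^(1/3)`. -/
def wedge : Set (ℝ × ℝ) := {p | |p.2| < p.1}

section Wedge

variable {p : ℝ × ℝ}

theorem mem_wedge : p ∈ wedge ↔ |p.2| < p.1 := Iff.rfl

theorem isOpen_wedge : IsOpen wedge :=
  isOpen_lt continuous_snd.abs continuous_fst

theorem ordConnected_wedge_fst (v : ℝ) : {u | (u, v) ∈ wedge}.OrdConnected :=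
  ordConnected_Ioi (a := |v|)

theorem ordConnected_wedge_snd (u : ℝ) : {v | (u, v) ∈ wedge}.OrdConnected := by
  convert ordConnected_Ioo (a := -u) (b := u) using 1
  ext v
  exact mem_wedge.trans abs_lt

theorem mk_zero_mem_wedge {u : ℝ} (hu : 0 < u) : (u, 0) ∈ wedge := by
  simpa [wedge] using hu

theorem mk_sq_add_one_mem_wedge (v : ℝ) : (v ^ 2 + 1, v) ∈ wedge := by
  show |v| < v ^ 2 + 1
  nlinarith [sq_abs v, abs_nonneg v]

theorem pos_of_mem_wedge (hp : p ∈ wedge) : 0 < p.1 :=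
  (abs_nonneg _).trans_lt (mem_wedge.1 hp)

theorem sub_pos_of_mem_wedge (hp : p ∈ wedge) : 0 < p.1 - p.2 := by
  linarith [(abs_lt.1 (mem_wedge.1 hp)).2]

theorem add_pos_of_mem_wedge (hp : p ∈ wedge) : 0 < p.1 + p.2 := by
  linarith [(abs_lt.1 (mem_wedge.1 hp)).1]

theorem eq_add_of_hasDerivAt_wedge {f : ℝ × ℝ → ℝ} {a c : ℝ}
    (hu : ∀ u, 0 < u → HasDerivAt (fun s => f (s, 0)) a u)
    (hv : ∀ q ∈ wedge, HasDerivAt (fun t => f (q.1, t)) c q.2) (hp : p ∈ wedge) :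
    f p = f (1, 0) + a * (p.1 - 1) + c * p.2 := by
  have hvert := (ordConnected_wedge_snd p.1).eq_add_mul_sub_of_hasDerivAt
    (f := fun t => f (p.1, t)) (fun t ht => hv (p.1, t) ht)
    (mk_zero_mem_wedge (pos_of_mem_wedge hp)) hp
  have hhor := ordConnected_Ioi.eq_add_mul_sub_of_hasDerivAt hu (mem_Ioi.2 one_pos)
    (pos_of_mem_wedge hp)
  simp only [sub_zero] at hvert
  linarith

theorem exists_eq_affine_of_hasDerivAt_wedge {R Ru Rv : ℝ × ℝ → ℝ}
    (hRu : ∀ p ∈ wedge, HasDerivAt (fun s => R (s, p.2)) (Ru p) p.1)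
    (hRv : ∀ p ∈ wedge, HasDerivAt (fun t => R (p.1, t)) (Rv p) p.2)
    (hRu_eq_Rv : ∀ p ∈ wedge, Ru p = Rv p)
    (hRu_t : ∀ p ∈ wedge, HasDerivAt (fun t => Ru (p.1, t)) 0 p.2)
    (hRv_s : ∀ p ∈ wedge, HasDerivAt (fun s => Rv (s, p.2)) 0 p.1) :
    ∃ a b : ℝ, ∀ p ∈ wedge, R p = a * (p.1 + p.2) + b := by
  have hRu_const : ∀ p ∈ wedge, Ru p = Ru (1, 0) := fun p hp => by
    have hu : ∀ u, 0 < u → HasDerivAt (fun s => Ru (s, 0)) 0 u := fun u hu => by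
      have : Ru =ᶠ[𝓝 (u, 0)] Rv :=
        eventually_of_mem (isOpen_wedge.mem_nhds (mk_zero_mem_wedge hu)) hRu_eq_Rv
      exact (hRv_s (u, 0) (mk_zero_mem_wedge hu)).congr_of_eventuallyEq
        (this.comp_tendsto (tendsto_mk_left (u, 0)))
    simpa using eq_add_of_hasDerivAt_wedge hu hRu_t hp
  refine ⟨Ru (1, 0), R (1, 0) - Ru (1, 0), fun p hp => ?_⟩
  have hR := eq_add_of_hasDerivAt_wedge (f := R) (a := Ru (1, 0)) (c := Ru (1, 0))
    (fun u hu => hRu_const (u, 0) (mk_zero_mem_wedge hu) ▸ hRu (u, 0) (mk_zero_mem_wedge hu))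
    (fun q hq => (hRu_eq_Rv q hq ▸ hRu_const q hq) ▸ hRv q hq) hp
  linarith

end Wedge

/-- An Euler–Poisson–Darboux equation on `wedge`. -/
def SolvesEPD (E : ℝ × ℝ → ℝ) : Prop :=
  ∀ p ∈ wedge, (p.1 - p.2) * pdt (pdx E) p = pdt E p - pdx E p

namespace SolvesEPD

variable {E : ℝ × ℝ → ℝ} {p : ℝ × ℝ}

theorem eventuallyEq (hpde : SolvesEPD E) (hp : p ∈ wedge) :
    (fun q => pdt E q - pdx E q) =ᶠ[𝓝 p] fun q => (q.1 - q.2) * pdt (pdx E) q :=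
  eventually_of_mem (isOpen_wedge.mem_nhds hp) fun q hq => (hpde q hq).symm

theorem pdt_pdt_eq (hpde : SolvesEPD E) (hE : ContDiffOn ℝ 3 E wedge) (hp : p ∈ wedge) :
    pdt (pdt E) p = (p.1 - p.2) * pdt (pdt (pdx E)) p := by
  have hEv : ContDiffOn ℝ 2 (pdt E) wedge := hE.pdt isOpen_wedge (by norm_num)
  have hEu : ContDiffOn ℝ 2 (pdx E) wedge := hE.pdx isOpen_wedge (by norm_num)
  have hK : ContDiffOn ℝ 1 (pdt (pdx E)) wedge := hEu.pdt isOpen_wedge (by norm_num)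
  have hlhs := (hasDerivAt_pdt (hEv.differentiableAt_of_isOpen isOpen_wedge two_ne_zero hp)).sub
    (hasDerivAt_pdt (hEu.differentiableAt_of_isOpen isOpen_wedge two_ne_zero hp))
  have hrhs := ((hasDerivAt_id p.2).const_sub p.1).mul
    (hasDerivAt_pdt (hK.differentiableAt_of_isOpen isOpen_wedge one_ne_zero hp))
  have := hlhs.unique <|
    hrhs.congr_of_eventuallyEq ((hpde.eventuallyEq hp).comp_tendsto (tendsto_mk_right p))
  simp only [id_eq] at this
  linarith

theorem pdt_pdt_pdx_mk_eq (hpde : SolvesEPD E) (hE : ContDiffOn ℝ 3 E wedge) {u u' v : ℝ}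
    (hu : (u, v) ∈ wedge) (hu' : (u', v) ∈ wedge) :
    pdt (pdt (pdx E)) (u, v) = pdt (pdt (pdx E)) (u', v) := by
  have hEvv : ContDiffOn ℝ 1 (pdt (pdt E)) wedge :=
    (hE.pdt isOpen_wedge (m := 2) (by norm_num)).pdt isOpen_wedge (by norm_num)
  have hquot : ∀ s ∈ {s | (s, v) ∈ wedge},
      pdt (pdt (pdx E)) (s, v) = pdt (pdt E) (s, v) / (s - v) := fun s hs => by
    rw [hpde.pdt_pdt_eq hE hs, mul_div_cancel_left₀ _ (sub_pos_of_mem_wedge hs).ne']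
  have hderiv : ∀ s ∈ {s | (s, v) ∈ wedge},
      HasDerivAt (fun s => pdt (pdt E) (s, v) / (s - v)) 0 s := by
    intro s hs
    refine ((hasDerivAt_pdx (hEvv.differentiableAt_of_isOpen isOpen_wedge one_ne_zero hs)).div
      ((hasDerivAt_id s).sub_const v) (sub_pos_of_mem_wedge hs).ne').congr_deriv ?_
    rw [pdx_pdt_pdt_eq_pdt_pdt_pdx hE isOpen_wedge hs, hpde.pdt_pdt_eq hE hs, id_eq]
    ring
  rw [hquot u hu, hquot u' hu',
    (ordConnected_wedge_fst v).eq_add_mul_sub_of_hasDerivAt hderiv hu' hu, zero_mul, add_zero]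

theorem pdt_pdx_sub_eq (hpde : SolvesEPD E) (hE : ContDiffOn ℝ 3 E wedge) {u u' v : ℝ}
    (hu : (u, v) ∈ wedge) (hu' : (u', v) ∈ wedge) :
    pdt (pdx E) (u, v) - pdt (pdx E) (u, 0) = pdt (pdx E) (u', v) - pdt (pdx E) (u', 0) := by
  have hK : ContDiffOn ℝ 1 (pdt (pdx E)) wedge :=
    (hE.pdx isOpen_wedge (m := 2) (by norm_num)).pdt isOpen_wedge (by norm_num)
  have hderiv : ∀ t ∈ {t | (u, t) ∈ wedge} ∩ {t | (u', t) ∈ wedge},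
      HasDerivAt (fun t => pdt (pdx E) (u, t) - pdt (pdx E) (u', t)) 0 t := by
    rintro t ⟨ht, ht'⟩
    refine ((hasDerivAt_pdt (p := (u, t))
      (hK.differentiableAt_of_isOpen isOpen_wedge one_ne_zero ht)).sub
      (hasDerivAt_pdt (p := (u', t))
        (hK.differentiableAt_of_isOpen isOpen_wedge one_ne_zero ht'))).congr_deriv ?_
    rw [hpde.pdt_pdt_pdx_mk_eq hE ht ht', sub_self]
  have := ((ordConnected_wedge_snd u).inter
    (ordConnected_wedge_snd u')).eq_add_mul_sub_of_hasDerivAt hderiv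
    ⟨mk_zero_mem_wedge (pos_of_mem_wedge hu), mk_zero_mem_wedge (pos_of_mem_wedge hu')⟩
    ⟨hu, hu'⟩
  linarith

theorem exists_pdt_pdx_eq_add (hpde : SolvesEPD E) (hE : ContDiffOn ℝ 3 E wedge) :
    ∃ φ ψ : ℝ → ℝ, ContDiffOn ℝ 1 φ (Ioi 0) ∧ ContDiff ℝ 1 ψ ∧
      ∀ p ∈ wedge, pdt (pdx E) p = φ p.1 + ψ p.2 := by
  have hK : ContDiffOn ℝ 1 (pdt (pdx E)) wedge :=
    (hE.pdx isOpen_wedge (m := 2) (by norm_num)).pdt isOpen_wedge (by norm_num)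
  refine ⟨fun u => pdt (pdx E) (u, 0),
    fun v => pdt (pdx E) (v ^ 2 + 1, v) - pdt (pdx E) (v ^ 2 + 1, 0), ?_, ?_, fun p hp => ?_⟩
  · exact hK.comp (by fun_prop) fun u hu => mk_zero_mem_wedge hu
  · exact (hK.comp_contDiff (by fun_prop) mk_sq_add_one_mem_wedge).sub
      (hK.comp_contDiff (by fun_prop) fun v => mk_zero_mem_wedge (by positivity))
  · have := hpde.pdt_pdx_sub_eq hE hp (mk_sq_add_one_mem_wedge p.2)
    linarith

theorem exists_eq_add_affine (hpde : SolvesEPD E) (hE : ContDiffOn ℝ 2 E wedge)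
    {F F₁ F₂ G G₁ G₂ : ℝ → ℝ}
    (hF : ∀ u, 0 < u → HasDerivAt F (F₁ u) u ∧ HasDerivAt F₁ (F₂ u) u)
    (hG : ∀ v, HasDerivAt G (G₁ v) v ∧ HasDerivAt G₁ (G₂ v) v)
    (hK : ∀ p ∈ wedge, 2 * pdt (pdx E) p = F₂ p.1 + G₂ p.2) :
    ∃ a b : ℝ, ∀ p ∈ wedge,
      E p = F p.1 + G p.2 + (p.1 - p.2) / 2 * (G₁ p.2 - F₁ p.1) + a * (p.1 + p.2) + b := by
  have hEd : ∀ p ∈ wedge, DifferentiableAt ℝ E p := fun p =>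
    hE.differentiableAt_of_isOpen isOpen_wedge two_ne_zero
  have hEu : ∀ p ∈ wedge, DifferentiableAt ℝ (pdx E) p := fun p =>
    (hE.pdx isOpen_wedge le_rfl).differentiableAt_of_isOpen isOpen_wedge one_ne_zero
  have hEv : ∀ p ∈ wedge, DifferentiableAt ℝ (pdt E) p := fun p =>
    (hE.pdt isOpen_wedge le_rfl).differentiableAt_of_isOpen isOpen_wedge one_ne_zero
  set R : ℝ × ℝ → ℝ := fun p => E p - (F p.1 + G p.2 + (p.1 - p.2) / 2 * (G₁ p.2 - F₁ p.1))
  set Ru : ℝ × ℝ → ℝ := fun p => pdx E p - (F₁ p.1 + G₁ p.2) / 2 + (p.1 - p.2) / 2 * F₂ p.1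
  set Rv : ℝ × ℝ → ℝ := fun p => pdt E p - (F₁ p.1 + G₁ p.2) / 2 - (p.1 - p.2) / 2 * G₂ p.2
  have hRu : ∀ p ∈ wedge, HasDerivAt (fun s => R (s, p.2)) (Ru p) p.1 := fun p hp => by
    have hF' := hF p.1 (pos_of_mem_wedge hp)
    simp only [R]
    refine ((hasDerivAt_pdx (hEd p hp)).sub ((hF'.1.add_const _).add
      ((((hasDerivAt_id _).sub_const p.2).div_const 2).mul
        ((hasDerivAt_const _ (G₁ p.2)).sub hF'.2)))).congr_deriv ?_
    simp only [Ru, id_eq, Pi.sub_apply]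
    ring
  have hRv : ∀ p ∈ wedge, HasDerivAt (fun t => R (p.1, t)) (Rv p) p.2 := fun p hp => by
    simp only [R]
    refine ((hasDerivAt_pdt (hEd p hp)).sub (((hG p.2).1.const_add _).add
      ((((hasDerivAt_id _).const_sub p.1).div_const 2).mul
        ((hG p.2).2.sub_const (F₁ p.1))))).congr_deriv ?_
    simp only [Rv, id_eq]
    ring
  have hRu_eq_Rv : ∀ p ∈ wedge, Ru p = Rv p := fun p hp => by
    simp only [Ru, Rv]
    linear_combination (-(p.1 - p.2) / 2) * hK p hp + hpde p hp
  have hRu_t : ∀ p ∈ wedge, HasDerivAt (fun t => Ru (p.1, t)) 0 p.2 := fun p hp => by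
    simp only [Ru]
    refine (((hasDerivAt_pdt (hEu p hp)).sub (((hG p.2).2.const_add _).div_const 2)).add
      ((((hasDerivAt_id _).const_sub p.1).div_const 2).mul_const (F₂ p.1))).congr_deriv ?_
    linear_combination hK p hp / 2
  have hRv_s : ∀ p ∈ wedge, HasDerivAt (fun s => Rv (s, p.2)) 0 p.1 := fun p hp => by
    simp only [Rv]
    refine (((hasDerivAt_pdx (hEv p hp)).sub
      (((hF p.1 (pos_of_mem_wedge hp)).2.add_const _).div_const 2)).sub
      ((((hasDerivAt_id _).sub_const p.2).div_const 2).mul_const (G₂ p.2))).congr_deriv ?_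
    rw [pdx_pdt_eq_pdt_pdx hE isOpen_wedge hp]
    linear_combination hK p hp / 2
  obtain ⟨a, b, hR⟩ := exists_eq_affine_of_hasDerivAt_wedge hRu hRv hRu_eq_Rv hRu_t hRv_s
  refine ⟨a, b, fun p hp => ?_⟩
  have hRp := hR p hp
  simp only [R] at hRp
  linarith

theorem exists_eq (hpde : SolvesEPD E) (hE : ContDiffOn ℝ 3 E wedge) :
    ∃ F G : ℝ → ℝ, ContDiffOn ℝ 3 F (Ioi 0) ∧ ContDiff ℝ 3 G ∧
      ∀ p ∈ wedge, E p = F p.1 + G p.2 + (p.1 - p.2) / 2 * (deriv G p.2 - deriv F p.1) := by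
  obtain ⟨φ, ψ, hφ, hψ, hK⟩ := hpde.exists_pdt_pdx_eq_add hE
  obtain ⟨F, F₁, hFc, hF⟩ := ((contDiffOn_const (c := (2 : ℝ))).mul hφ).exists_hasDerivAt_hasDerivAt
    (n := 1) isOpen_Ioi ordConnected_Ioi (mem_Ioi.2 one_pos)
  obtain ⟨G, G₁, hGc, hG⟩ :=
    ((contDiff_const (c := (2 : ℝ))).mul hψ).contDiffOn.exists_hasDerivAt_hasDerivAt
      (n := 1) isOpen_univ ordConnected_univ (mem_univ 0)
  obtain ⟨a, b, hEFG⟩ := hpde.exists_eq_add_affine (hE.of_le (by norm_num)) hF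
    (fun v => hG v (mem_univ v)) fun p hp => by rw [hK p hp]; ring
  have h3 : ((1 : ℕ) : WithTop ℕ∞) + 2 = 3 := by norm_num
  rw [h3] at hFc hGc
  -- the affine remainder `a (u + v) + b` is absorbed by `F + a u + b` and `G + a v`
  refine ⟨fun u => F u + a * u + b, fun v => G v + a * v, by fun_prop,
    by rw [← contDiffOn_univ]; fun_prop, fun p hp => ?_⟩
  have hF' : HasDerivAt (fun u => F u + a * u + b) (F₁ p.1 + a * 1) p.1 :=
    ((hF p.1 (pos_of_mem_wedge hp)).1.add ((hasDerivAt_id' _).const_mul a)).add_const b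
  have hG' : HasDerivAt (fun v => G v + a * v) (G₁ p.2 + a * 1) p.2 :=
    (hG p.2 (mem_univ _)).1.add ((hasDerivAt_id' _).const_mul a)
  rw [hEFG p hp, hF'.deriv, hG'.deriv]
  ring

end SolvesEPD

/-- The inverse `(u, v) ↦ (x, T)` of the characteristic coordinates. -/
noncomputable def fromCharCoords (p : ℝ × ℝ) : ℝ × ℝ :=
  (2 / (p.1 + p.2), ((p.1 - p.2) / 6) ^ 3)

/-- `B / x` in characteristic coordinates. -/
noncomputable def charTransform (B : ℝ × ℝ → ℝ) (p : ℝ × ℝ) : ℝ :=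
  (p.1 + p.2) / 2 * B (fromCharCoords p)

section CharCoords

variable {f B : ℝ × ℝ → ℝ} {p : ℝ × ℝ}

theorem isOpen_quadrant : IsOpen {q : ℝ × ℝ | 0 < q.1 ∧ 0 < q.2} :=
  (isOpen_lt continuous_const continuous_fst).inter (isOpen_lt continuous_const continuous_snd)

theorem fromCharCoords_mem (hp : p ∈ wedge) :
    fromCharCoords p ∈ {q : ℝ × ℝ | 0 < q.1 ∧ 0 < q.2} :=
  ⟨div_pos two_pos (add_pos_of_mem_wedge hp),
    pow_pos (div_pos (sub_pos_of_mem_wedge hp) (by norm_num)) 3⟩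

theorem fromCharCoords_charCoords {x T : ℝ} (hx : 0 < x) (hT : 0 < T) :
    fromCharCoords (1 / x + 3 * T ^ ((1 : ℝ) / 3), 1 / x - 3 * T ^ ((1 : ℝ) / 3)) = (x, T) := by
  have hcube : (T ^ ((1 : ℝ) / 3)) ^ 3 = T := by
    rw [← Real.rpow_natCast, ← Real.rpow_mul hT.le]
    norm_num
  simp only [fromCharCoords, Prod.mk.injEq]
  constructor
  · field_simp
    ring
  · rw [show ∀ a b : ℝ, (a + 3 * b - (a - 3 * b)) / 6 = b by intros; ring, hcube]

theorem mk_charCoords_mem_wedge {x T : ℝ} (hx : 0 < x) (hT : 0 < T) :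
    (1 / x + 3 * T ^ ((1 : ℝ) / 3), 1 / x - 3 * T ^ ((1 : ℝ) / 3)) ∈ wedge := by
  have hs : 0 < T ^ ((1 : ℝ) / 3) := by positivity
  have hx' : 0 < 1 / x := by positivity
  exact mem_wedge.2 (abs_lt.2 ⟨by linarith, by linarith⟩)

theorem contDiffOn_fromCharCoords {n : WithTop ℕ∞} : ContDiffOn ℝ n fromCharCoords wedge :=
  (contDiffOn_const.div (by fun_prop) fun _ hq => (add_pos_of_mem_wedge hq).ne').prodMk
    (by fun_prop)

theorem ContDiffOn.charTransform {n : WithTop ℕ∞}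
    (hB : ContDiffOn ℝ n B {q : ℝ × ℝ | 0 < q.1 ∧ 0 < q.2}) :
    ContDiffOn ℝ n (charTransform B) wedge :=
  (contDiffOn_id.fst.add contDiffOn_id.snd |>.div_const 2).mul
    (hB.comp contDiffOn_fromCharCoords fun _ hp => fromCharCoords_mem hp)

theorem hasDerivAt_comp_fromCharCoords_fst (hf : DifferentiableAt ℝ f (fromCharCoords p))
    (hp : p.1 + p.2 ≠ 0) :
    HasDerivAt (fun s => f (fromCharCoords (s, p.2)))
      (pdx f (fromCharCoords p) * (-2 / (p.1 + p.2) ^ 2)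
        + pdt f (fromCharCoords p) * ((p.1 - p.2) ^ 2 / 72)) p.1 := by
  refine (hasDerivAt_comp_prodMk (γ₁ := fun s => 2 / (s + p.2))
    (γ₂ := fun s => ((s - p.2) / 6) ^ 3) hf
    ((hasDerivAt_const _ (2 : ℝ)).div ((hasDerivAt_id _).add_const p.2) hp)
    ((((hasDerivAt_id _).sub_const p.2).div_const 6).pow 3)).congr_deriv ?_
  simp only [id_eq, fromCharCoords]
  ring

theorem hasDerivAt_comp_fromCharCoords_snd (hf : DifferentiableAt ℝ f (fromCharCoords p))
    (hp : p.1 + p.2 ≠ 0) :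
    HasDerivAt (fun t => f (fromCharCoords (p.1, t)))
      (pdx f (fromCharCoords p) * (-2 / (p.1 + p.2) ^ 2)
        - pdt f (fromCharCoords p) * ((p.1 - p.2) ^ 2 / 72)) p.2 := by
  refine (hasDerivAt_comp_prodMk (γ₁ := fun t => 2 / (p.1 + t))
    (γ₂ := fun t => ((p.1 - t) / 6) ^ 3) hf
    ((hasDerivAt_const _ (2 : ℝ)).div ((hasDerivAt_id _).const_add p.1) hp)
    ((((hasDerivAt_id _).const_sub p.1).div_const 6).pow 3)).congr_deriv ?_
  simp only [id_eq, fromCharCoords]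
  ring

theorem pdx_charTransform (hB : DifferentiableAt ℝ B (fromCharCoords p)) (hp : p.1 + p.2 ≠ 0) :
    pdx (charTransform B) p = B (fromCharCoords p) / 2 - pdx B (fromCharCoords p) / (p.1 + p.2)
      + (p.1 + p.2) * (p.1 - p.2) ^ 2 * pdt B (fromCharCoords p) / 144 := by
  refine HasDerivAt.deriv <| ((((hasDerivAt_id _).add_const p.2).div_const 2).mul
    (hasDerivAt_comp_fromCharCoords_fst hB hp)).congr_deriv ?_
  simp only [id_eq]
  field_simp
  ring

theorem pdt_charTransform (hB : DifferentiableAt ℝ B (fromCharCoords p)) (hp : p.1 + p.2 ≠ 0) :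
    pdt (charTransform B) p = B (fromCharCoords p) / 2 - pdx B (fromCharCoords p) / (p.1 + p.2)
      - (p.1 + p.2) * (p.1 - p.2) ^ 2 * pdt B (fromCharCoords p) / 144 := by
  refine HasDerivAt.deriv <| ((((hasDerivAt_id _).const_add p.1).div_const 2).mul
    (hasDerivAt_comp_fromCharCoords_snd hB hp)).congr_deriv ?_
  simp only [id_eq]
  field_simp
  ring

theorem rpow_pow_three_neg_four_div_three {y : ℝ} (hy : 0 ≤ y) :
    (y ^ 3) ^ (-(4 : ℝ) / 3) = (y ^ 4)⁻¹ := by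
  rw [← Real.rpow_natCast y 3, ← Real.rpow_mul hy,
    show ((3 : ℕ) : ℝ) * (-(4 : ℝ) / 3) = -((4 : ℕ) : ℝ) by norm_num, Real.rpow_neg hy,
    Real.rpow_natCast]

theorem solvesEPD_charTransform (hB : ContDiffOn ℝ 3 B {q : ℝ × ℝ | 0 < q.1 ∧ 0 < q.2})
    (hwave : ∀ x T : ℝ, 0 < x → 0 < T →
      pdt (pdt B) (x, T) = T ^ (-(4 : ℝ) / 3) * x ^ 4 * pdx (pdx B) (x, T)) :
    SolvesEPD (charTransform B) := by
  intro p hp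
  have hσ := (add_pos_of_mem_wedge hp).ne'
  have hδ := sub_pos_of_mem_wedge hp
  have hq := fromCharCoords_mem hp
  have hBd : ∀ r ∈ wedge, DifferentiableAt ℝ B (fromCharCoords r) := fun r hr =>
    hB.differentiableAt_of_isOpen isOpen_quadrant three_ne_zero (fromCharCoords_mem hr)
  have hBxd : DifferentiableAt ℝ (pdx B) (fromCharCoords p) :=
    (hB.pdx isOpen_quadrant (m := 2) (by norm_num)).differentiableAt_of_isOpen
      isOpen_quadrant two_ne_zero hq
  have hBtd : DifferentiableAt ℝ (pdt B) (fromCharCoords p) :=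
    (hB.pdt isOpen_quadrant (m := 2) (by norm_num)).differentiableAt_of_isOpen
      isOpen_quadrant two_ne_zero hq
  have hEu : pdx (charTransform B) =ᶠ[𝓝 p] fun r => B (fromCharCoords r) / 2
      - pdx B (fromCharCoords r) / (r.1 + r.2)
      + (r.1 + r.2) * (r.1 - r.2) ^ 2 * pdt B (fromCharCoords r) / 144 :=
    eventually_of_mem (isOpen_wedge.mem_nhds hp) fun r hr =>
      pdx_charTransform (hBd r hr) (add_pos_of_mem_wedge hr).ne'
  have hEuv : HasDerivAt (fun t => B (fromCharCoords (p.1, t)) / 2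
      - pdx B (fromCharCoords (p.1, t)) / (p.1 + t)
      + (p.1 + t) * (p.1 - t) ^ 2 * pdt B (fromCharCoords (p.1, t)) / 144) _ p.2 :=
    (((hasDerivAt_comp_fromCharCoords_snd (hBd p hp) hσ).div_const 2).sub
      ((hasDerivAt_comp_fromCharCoords_snd hBxd hσ).div ((hasDerivAt_id _).const_add p.1) hσ)).add
    (((((hasDerivAt_id _).const_add p.1).mul (((hasDerivAt_id _).const_sub p.1).pow 2)).mul
      (hasDerivAt_comp_fromCharCoords_snd hBtd hσ)).div_const 144)
  have hsymm : pdx (pdt B) (fromCharCoords p) = pdt (pdx B) (fromCharCoords p) :=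
    pdx_pdt_eq_pdt_pdx (hB.of_le (by norm_num)) isOpen_quadrant hq
  have hwave' := hwave _ _ hq.1 hq.2
  simp only [fromCharCoords] at hwave'
  rw [rpow_pow_three_neg_four_div_three (div_pos hδ (by norm_num)).le] at hwave'
  rw [hEu.pdt_eq.trans hEuv.deriv, pdx_charTransform (hBd p hp) hσ,
    pdt_charTransform (hBd p hp) hσ, hsymm]
  simp only [fromCharCoords, id_eq, Pi.mul_apply, Pi.pow_apply] at hwave' ⊢
  rw [hwave']
  field_simp
  ring

end CharCoords

theorem stmt_19 (B : ℝ × ℝ → ℝ)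
    (hB : ContDiffOn ℝ 3 B {p : ℝ × ℝ | 0 < p.1 ∧ 0 < p.2})
    (hwave : ∀ x T : ℝ, 0 < x → 0 < T →
      pdt (pdt B) (x, T)
        = T ^ (-(4 : ℝ) / 3) * x ^ 4 * pdx (pdx B) (x, T)) :
    ∃ F G : ℝ → ℝ, ContDiffOn ℝ 3 F (Set.Ioi 0) ∧ ContDiff ℝ 3 G ∧
      ∀ x T : ℝ, 0 < x → 0 < T →
        B (x, T) = x *
          (F (1 / x + 3 * T ^ ((1 : ℝ) / 3)) + G (1 / x - 3 * T ^ ((1 : ℝ) / 3))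
            + 3 * T ^ ((1 : ℝ) / 3) *
              (deriv G (1 / x - 3 * T ^ ((1 : ℝ) / 3))
                - deriv F (1 / x + 3 * T ^ ((1 : ℝ) / 3)))) := by
  obtain ⟨F, G, hF, hG, hE⟩ := (solvesEPD_charTransform hB hwave).exists_eq hB.charTransform
  refine ⟨F, G, hF, hG, fun x T hx hT => ?_⟩
  have h := hE _ (mk_charCoords_mem_wedge hx hT)
  rw [charTransform, fromCharCoords_charCoords hx hT,
    show ∀ a b : ℝ, (a + b + (a - b)) / 2 = a by intros; ring,
    show ∀ a b : ℝ, (a + b - (a - b)) / 2 = b by intros; ring] at h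
  rw [← h]
  field_simp
end
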